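/- arXiv:1307.1174 — 3 statements merged into one kernel-verified Lean document; each statement's English description precedes it below -/
import Mathlib

section
/- Let {A_1,…,A_k} be a non-degenerate collection of n×m real matrices with n ≤ m < nk. Let j_1,…,j_r ∈ {1,…,k} be distinct indices and let J' ⊆ {1,…,n} with #J' = n'. Then the linear map from S to (ℝ^n)^{r−1} × ℝ^{J'} sending ξ = (ξ_1,…,ξ_k) to (ξ_{j_1},…,ξ_{j_{r−1}}, ((ξ_{j_r})_i)_{i∈J'}) is a linear isomorphism; in particular the only ξ ∈ S with ξ_{j_1} = ⋯ = ξ_{j_{r−1}} = 0 and (ξ_{j_r})_i = 0 for all i ∈ J' is ξ = 0, and dim S = n(r−1) + n' = nk − m. -/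
/-!
By non-degeneracy, the rows of the `A_i` with `i ∉ {j_1,…,j_r}`, together with the rows of
`A_{j_r}` indexed outside `J'`, are linearly independent. For `ξ ∈ S` whose coordinates
`ξ_{j_1},…,ξ_{j_{r-1}}` and `(ξ_{j_r})_i`, `i ∈ J'`, vanish, the relation `∑ⱼ Aⱼᵗ ξⱼ = 0` is a
vanishing combination of exactly these rows, so `ξ = 0`: the coordinate map is injective. Its
target has dimension `n(r−1) + n' = nk − m`, while `S`, the kernel of a linear map
`ℝ^{nk} → ℝ^m`, has dimension at least `nk − m`; hence the map is bijective.
-/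

open MeasureTheory

/-- Non-degeneracy of a collection of `n × m` matrices: for every `J ⊆ {1,…,k}` with
`#J = k − r` and every `j ∉ J`, the `m` rows obtained by stacking the matrices `A_i`,
`i ∈ J`, together with any choice of `n − n'` distinct rows of `A_j`, are linearly
independent (i.e. the corresponding `m × m` matrix is non-singular). -/
def IsNondegenerate {n k : ℕ} {ι : Type} (r n' : ℕ)
    (A : Fin k → Matrix (Fin n) ι ℝ) : Prop :=
  ∀ J : Finset (Fin k), J.card = k - r → ∀ j : Fin k, j ∉ J →
    ∀ ρ : Fin (n - n') → Fin n, Function.Injective ρ →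
      LinearIndependent ℝ
        (Sum.elim (fun p : {x // x ∈ J} × Fin n => A p.1.1 p.2)
          (fun l : Fin (n - n') => A j (ρ l)))

/-- The subspace `S = {ξ = (ξ₁,…,ξ_k) : ∑ⱼ Aⱼᵗ ξⱼ = 0}` of the configuration space `(ℝⁿ)ᵏ`. -/
noncomputable def Ssub {n m k : ℕ} (A : Fin k → Matrix (Fin n) (Fin m) ℝ) :
    Submodule ℝ (EuclideanSpace ℝ (Fin k × Fin n)) :=
  LinearMap.ker (Matrix.toEuclideanLin
    (Matrix.of fun (l : Fin m) (p : Fin k × Fin n) => A p.1 p.2 l))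

/-- The `j`-th component `ξ_j ∈ ℝⁿ` of a point `ξ` of the configuration space `(ℝⁿ)ᵏ`. -/
noncomputable def projC {n k : ℕ} (j : Fin k) (ξ : EuclideanSpace ℝ (Fin k × Fin n)) :
    EuclideanSpace ℝ (Fin n) :=
  WithLp.toLp 2 (fun i => ξ (j, i))

/-- The coordinate map `ξ ↦ (ξ_{j₁},…,ξ_{j_{r−1}}, ((ξ_{j_r})_i)_{i ∈ J'})` on `S`. -/
noncomputable def coordMap {n m k : ℕ} (A : Fin k → Matrix (Fin n) (Fin m) ℝ)
    (r : ℕ) (hr0 : 1 ≤ r) (js : Fin r → Fin k) (J' : Finset (Fin n)) (ξ : Ssub A) :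
    (Fin (r - 1) → EuclideanSpace ℝ (Fin n)) × ({i // i ∈ J'} → ℝ) :=
  (fun l => projC (js ⟨l.1, lt_of_lt_of_le l.2 (Nat.sub_le r 1)⟩) ξ.1,
   fun i => ξ.1 (js ⟨r - 1, Nat.sub_lt hr0 Nat.one_pos⟩, i.1))

open Module Function

theorem LinearIndependent.eq_zero_of_sum_smul_eq_zero {R M ι κ : Type*} [Ring R]
    [AddCommGroup M] [Module R M] [Fintype ι] [Fintype κ] {v : ι → M} {e : κ → ι}
    (hv : LinearIndependent R (v ∘ e)) (he : Injective e) {c : ι → R}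
    (hc : ∀ i ∉ Set.range e, c i = 0) (hsum : ∑ i, c i • v i = 0) : c = 0 := by
  have hsum' : ∑ q, c (e q) • (v ∘ e) q = 0 :=
    (Fintype.sum_of_injective e he _ (fun i => c i • v i)
      (fun i hi => by rw [hc i hi, zero_smul]) (fun _ => rfl)).trans hsum
  funext i
  by_cases hi : i ∈ Set.range e
  · obtain ⟨q, rfl⟩ := hi
    exact Fintype.linearIndependent_iff.mp hv _ hsum' q
  · exact hc i hi

theorem LinearMap.finrank_sub_finrank_le_finrank_ker {K V W : Type*} [DivisionRing K]
    [AddCommGroup V] [Module K V] [AddCommGroup W] [Module K W]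
    [FiniteDimensional K V] [FiniteDimensional K W] (f : V →ₗ[K] W) :
    finrank K V - finrank K W ≤ finrank K (ker f) := by
  have := f.finrank_range_add_finrank_ker
  have := (range f).finrank_le
  omega

section Ssub

variable {n m k : ℕ} (A : Fin k → Matrix (Fin n) (Fin m) ℝ)

theorem mem_Ssub_iff (ξ : EuclideanSpace ℝ (Fin k × Fin n)) :
    ξ ∈ Ssub A ↔ ∑ p, ξ p • A p.1 p.2 = 0 := by
  simp [Ssub, Matrix.toLpLin_apply, funext_iff, Matrix.mulVec, dotProduct, Finset.sum_apply,
    mul_comm]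

theorem le_finrank_Ssub : n * k - m ≤ finrank ℝ (Ssub A) := by
  unfold Ssub
  simpa [finrank_euclideanSpace, mul_comm] using
    LinearMap.finrank_sub_finrank_le_finrank_ker (Matrix.toEuclideanLin
      (Matrix.of fun (l : Fin m) (p : Fin k × Fin n) => A p.1 p.2 l))

noncomputable def coordLinearMap (r : ℕ) (hr0 : 1 ≤ r) (js : Fin r → Fin k)
    (J' : Finset (Fin n)) :
    Ssub A →ₗ[ℝ] (Fin (r - 1) → EuclideanSpace ℝ (Fin n)) × ({i // i ∈ J'} → ℝ) where
  toFun := coordMap A r hr0 js J'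
  map_add' _ _ := rfl
  map_smul' _ _ := rfl

end Ssub

theorem IsNondegenerate.eq_zero_of_mem_Ssub {n m k r n' : ℕ}
    {A : Fin k → Matrix (Fin n) (Fin m) ℝ} (hA : IsNondegenerate r n' A)
    {J : Finset (Fin k)} (hJ : J.card = k - r) {j : Fin k} (hj : j ∉ J)
    {J' : Finset (Fin n)} (hJ' : J'.card = n') {ξ : EuclideanSpace ℝ (Fin k × Fin n)}
    (hξ : ξ ∈ Ssub A) (hξJ : ∀ j' ∉ J, j' ≠ j → ∀ i, ξ (j', i) = 0)
    (hξj : ∀ i ∈ J', ξ (j, i) = 0) : ξ = 0 := by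
  have hcard : J'ᶜ.card = n - n' := by rw [Finset.card_compl, Fintype.card_fin, hJ']
  set ρ := J'ᶜ.orderEmbOfFin hcard
  set e : {x // x ∈ J} × Fin n ⊕ Fin (n - n') → Fin k × Fin n :=
    Sum.elim (fun p => (p.1.1, p.2)) (fun l => (j, ρ l))
  have he : Injective e := by
    refine Injective.sumElim ?_ (fun a b h => ρ.injective (Prod.ext_iff.1 h).2) ?_
    · rintro ⟨⟨a, _⟩, i⟩ ⟨⟨b, _⟩, i'⟩ h
      simp_all [Prod.ext_iff]
    · rintro ⟨⟨a, ha⟩, i⟩ l h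
      have haj : a = j := congrArg Prod.fst h
      exact hj (haj ▸ ha)
  have hv : LinearIndependent ℝ ((fun p : Fin k × Fin n => A p.1 p.2) ∘ e) := by
    rw [Sum.comp_elim]
    exact hA J hJ j hj ρ ρ.injective
  have hc : ∀ p ∉ Set.range e, ξ p = 0 := by
    rintro ⟨j', i⟩ hp
    by_cases hj' : j' ∈ J
    · exact absurd ⟨Sum.inl (⟨j', hj'⟩, i), rfl⟩ hp
    by_cases hjj : j' = j
    · subst hjj
      by_cases hi : i ∈ J'
      · exact hξj i hi
      · obtain ⟨l, rfl⟩ : i ∈ Set.range ρ := by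
          rw [Finset.range_orderEmbOfFin]
          simpa using hi
        exact absurd ⟨Sum.inr l, rfl⟩ hp
    · exact hξJ j' hj' hjj i
  have := hv.eq_zero_of_sum_smul_eq_zero he hc ((mem_Ssub_iff A ξ).1 hξ)
  exact PiLp.ext fun p => congrFun this p

theorem IsNondegenerate.eq_zero_of_coord_eq_zero {n m k r n' : ℕ}
    {A : Fin k → Matrix (Fin n) (Fin m) ℝ} (hA : IsNondegenerate r n' A) (hr0 : 1 ≤ r)
    {js : Fin r → Fin k} (hjs : Injective js) {J' : Finset (Fin n)} (hJ' : J'.card = n')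
    (ξ : Ssub A) (hξ : ∀ l : Fin (r - 1), ∀ i, ξ.1 (js ⟨l, by omega⟩, i) = 0)
    (hξ' : ∀ i ∈ J', ξ.1 (js ⟨r - 1, by omega⟩, i) = 0) : ξ = 0 := by
  refine Subtype.ext (hA.eq_zero_of_mem_Ssub (J := (Finset.univ.image js)ᶜ) ?_ ?_ hJ' ξ.2 ?_ hξ')
  · simp [Finset.card_compl, Finset.card_image_of_injective _ hjs]
  · simp
  · intro j hj hne i
    obtain ⟨t, rfl⟩ : ∃ t, js t = j := by simpa using hj
    have ht : t.1 ≠ r - 1 := fun h => hne (congrArg js (Fin.ext h))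
    exact hξ ⟨t, by omega⟩ i

theorem statement_8_general
    (n m k r n' : ℕ)
    (hr0 : 1 ≤ r) (hr1 : n * (r - 1) < n * k - m)
    (hn'def : n' = n * k - m - n * (r - 1))
    (A : Fin k → Matrix (Fin n) (Fin m) ℝ) (hA : IsNondegenerate r n' A)
    (js : Fin r → Fin k) (hjs : Function.Injective js)
    (J' : Finset (Fin n)) (hJ' : J'.card = n') :
    IsLinearMap ℝ (coordMap A r hr0 js J') ∧
    Function.Bijective (coordMap A r hr0 js J') ∧
    (∀ ξ : Ssub A,
        (∀ l : Fin (r - 1), ∀ i : Fin n,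
            ξ.1 (js ⟨l.1, lt_of_lt_of_le l.2 (Nat.sub_le r 1)⟩, i) = 0) →
        (∀ i ∈ J', ξ.1 (js ⟨r - 1, Nat.sub_lt hr0 Nat.one_pos⟩, i) = 0) →
        ξ = 0) ∧
    Module.finrank ℝ (Ssub A) = n * (r - 1) + n' ∧
    Module.finrank ℝ (Ssub A) = n * k - m := by
  set L := coordLinearMap A r hr0 js J'
  have hinj : Injective L := by
    rw [← LinearMap.ker_eq_bot, LinearMap.ker_eq_bot']
    intro ξ hξ
    exact hA.eq_zero_of_coord_eq_zero hr0 hjs hJ' ξ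
      (fun l i => congrArg (· i) (congrFun (congrArg Prod.fst hξ) l))
      (fun i hi => congrFun (congrArg Prod.snd hξ) ⟨i, hi⟩)
  have hcod : finrank ℝ ((Fin (r - 1) → EuclideanSpace ℝ (Fin n)) × ({i // i ∈ J'} → ℝ))
      = n * (r - 1) + n' := by
    simp [Module.finrank_pi_fintype, hJ', mul_comm]
  have hdim : finrank ℝ (Ssub A) = n * (r - 1) + n' :=
    le_antisymm (hcod ▸ L.finrank_le_finrank_of_injective hinj)
      (by have := le_finrank_Ssub A; omega)
  refine ⟨L.isLinear, ⟨hinj, ?_⟩, hA.eq_zero_of_coord_eq_zero hr0 hjs hJ', hdim, by omega⟩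
  exact (LinearMap.injective_iff_surjective_of_finrank_eq_finrank (hdim.trans hcod.symm)).1 hinj

theorem statement_8
    (n m k r n' : ℕ) (hk : 3 ≤ k) (hnm : n ≤ m) (hm : m < n * k)
    (hr0 : 1 ≤ r) (hr1 : n * (r - 1) < n * k - m) (hr2 : n * k - m ≤ n * r)
    (hn'def : n' = n * k - m - n * (r - 1))
    (A : Fin k → Matrix (Fin n) (Fin m) ℝ) (hA : IsNondegenerate r n' A)
    (js : Fin r → Fin k) (hjs : Function.Injective js)
    (J' : Finset (Fin n)) (hJ' : J'.card = n') :
    IsLinearMap ℝ (coordMap A r hr0 js J') ∧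
    Function.Bijective (coordMap A r hr0 js J') ∧
    (∀ ξ : Ssub A,
        (∀ l : Fin (r - 1), ∀ i : Fin n,
            ξ.1 (js ⟨l.1, lt_of_lt_of_le l.2 (Nat.sub_le r 1)⟩, i) = 0) →
        (∀ i ∈ J', ξ.1 (js ⟨r - 1, Nat.sub_lt hr0 Nat.one_pos⟩, i) = 0) →
        ξ = 0) ∧
    Module.finrank ℝ (Ssub A) = n * (r - 1) + n' ∧
    Module.finrank ℝ (Ssub A) = n * k - m :=
  statement_8_general n m k r n' hr0 hr1 hn'def A hA js hjs J' hJ'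
end

section
/- Let t, s be positive integers, let a_1, a_2, …, a_s be distinct positive real numbers, and let 0 ≤ η_1 < η_2 < ⋯ < η_t be integers. Then the t×s real matrix A whose entry in row i and column j is a_j^{η_i} has full rank; that is, rank A = min(t, s). -/
/-!
By Descartes' rule of signs, a nonzero polynomial with at most `k` nonzero coefficients has at
most `k - 1` positive roots. A vanishing linear combination of the rows of a square generalized
Vandermonde matrix with distinct positive nodes is such a polynomial with `k` positive roots, so
the square matrix is nonsingular. The leading `min t s × min t s` submatrix is of this
kind, which gives the lower bound on the rank of the `t × s` matrix.
-/

open Polynomial Finset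

namespace Polynomial

variable {R : Type*}

theorem signVariations_le_card_support_sub_one [Semiring R] [LinearOrder R] (P : R[X]) :
    P.signVariations ≤ #P.support - 1 := by
  induction hn : #P.support generalizing P with
  | zero => simp [card_support_eq_zero.1 hn]
  | succ n ih =>
    by_cases hP : P.eraseLead = 0
    · rw [← P.eraseLead_add_monomial_natDegree_leadingCoeff, hP, zero_add,
        signVariations_monomial]
      exact zero_le
    · have hn' : n ≠ 0 := by
        rwa [← card_support_eraseLead' hn, Ne, card_support_eq_zero]
      have := ih P.eraseLead (card_support_eraseLead' hn)
      have := P.signVariations_le_eraseLead_succ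
      omega

variable [CommRing R] [LinearOrder R] [IsStrictOrderedRing R]

theorem card_le_signVariations {P : R[X]} (hP : P ≠ 0) {S : Finset R}
    (hS : ∀ x ∈ S, 0 < x ∧ P.IsRoot x) : #S ≤ P.signVariations :=
  calc #S = S.val.countP (0 < ·) := (Multiset.countP_eq_card.2 fun x hx => (hS x hx).1).symm
    _ ≤ P.roots.countP (0 < ·) := Multiset.countP_le_of_le _ <|
        (Multiset.le_iff_subset S.nodup).2 fun x hx => (mem_roots hP).2 (hS x hx).2
    _ ≤ P.signVariations := P.roots_countP_pos_le_signVariations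

theorem card_lt_card_support_of_pos_roots {P : R[X]} (hP : P ≠ 0) {S : Finset R}
    (hS : ∀ x ∈ S, 0 < x ∧ P.IsRoot x) : #S < #P.support := by
  have := card_le_signVariations hP hS
  have := P.signVariations_le_card_support_sub_one
  have := card_pos.2 (support_nonempty.2 hP)
  omega

end Polynomial

section SparsePolynomial

variable {R ι : Type*} [CommRing R] [LinearOrder R] [IsStrictOrderedRing R] [Fintype ι]

theorem eq_zero_of_sum_mul_pow_eq_zero {η : ι → ℕ} (hη : Function.Injective η) {c : ι → R}
    {S : Finset R} (hpos : ∀ x ∈ S, 0 < x) (hcard : Fintype.card ι ≤ #S)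
    (hroot : ∀ x ∈ S, ∑ i, c i * x ^ η i = 0) : c = 0 := by
  classical
  set P : R[X] := ∑ i, monomial (η i) (c i)
  have hcoeff : ∀ n, P.coeff n = ∑ i, if η i = n then c i else 0 := fun n => by
    simp only [P, finsetSum_coeff, coeff_monomial]
  have hsupp : P.support ⊆ univ.image η := fun n hn => by
    by_contra hn'
    refine mem_support_iff.1 hn ((hcoeff n).trans (sum_eq_zero fun i _ => if_neg ?_))
    exact fun h => hn' (mem_image.2 ⟨i, mem_univ _, h⟩)
  by_contra hc
  obtain ⟨i, hi⟩ := Function.ne_iff.1 hc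
  have hP : P ≠ 0 := fun h => hi <| by
    simpa [hcoeff, hη.eq_iff] using congrArg (coeff · (η i)) h
  have hS : ∀ x ∈ S, 0 < x ∧ P.IsRoot x := fun x hx =>
    ⟨hpos x hx, by simpa [P, IsRoot, eval_finsetSum] using hroot x hx⟩
  have := card_lt_card_support_of_pos_roots hP hS
  have := (card_le_card hsupp).trans card_image_le
  simp only [card_univ] at this
  omega

end SparsePolynomial

namespace Matrix

variable {R m n : Type*}

def genVandermonde [Monoid R] (a : n → R) (η : m → ℕ) : Matrix m n R :=
  of fun i j => a j ^ η i

theorem det_genVandermonde_ne_zero [CommRing R] [LinearOrder R] [IsStrictOrderedRing R]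
    [Fintype n] [DecidableEq n] {a : n → R} (ha : Function.Injective a) (hpos : ∀ j, 0 < a j)
    {η : n → ℕ} (hη : Function.Injective η) : (genVandermonde a η).det ≠ 0 := by
  intro hdet
  obtain ⟨c, hc, hvec⟩ := exists_vecMul_eq_zero_iff.2 hdet
  refine hc (eq_zero_of_sum_mul_pow_eq_zero hη (S := univ.image a) ?_ ?_ ?_)
  · simpa using hpos
  · rw [card_image_of_injective _ ha, card_univ]
  · simp only [mem_image, mem_univ, true_and, forall_exists_index, forall_apply_eq_imp_iff]
    exact fun j => congrFun hvec j

theorem rank_genVandermonde [Field R] [LinearOrder R] [IsStrictOrderedRing R] {t s : ℕ}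
    {a : Fin s → R} (ha : Function.Injective a) (hpos : ∀ j, 0 < a j) {η : Fin t → ℕ} (hη : Function.Injective η) :
    (genVandermonde a η).rank = min t s := by
  set B := (genVandermonde a η).submatrix (Fin.castLE (min_le_left t s))
    (Fin.castLE (min_le_right t s))
  have hB : B.rank = min t s := by
    rw [rank_of_isUnit B ((isUnit_iff_isUnit_det B).2 (isUnit_iff_ne_zero.2
      (det_genVandermonde_ne_zero (ha.comp (Fin.castLE_injective _)) (fun j => hpos _)
        (hη.comp (Fin.castLE_injective _))))), Fintype.card_fin]
  refine le_antisymm (le_min (rank_le_height _) (rank_le_width _)) ?_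
  calc min t s = B.rank := hB.symm
    _ ≤ _ := rank_submatrix_le _ _ _

end Matrix

theorem statement_17_general
    (t s : ℕ)
    (a : Fin s → ℝ) (ha : Function.Injective a) (hapos : ∀ j, 0 < a j)
    (η : Fin t → ℕ) (hη : StrictMono η) :
    (Matrix.of fun (i : Fin t) (j : Fin s) => a j ^ η i).rank = min t s :=
  Matrix.rank_genVandermonde ha hapos hη.injective

theorem statement_17
    (t s : ℕ) (ht : 1 ≤ t) (hs : 1 ≤ s)
    (a : Fin s → ℝ) (ha : Function.Injective a) (hapos : ∀ j, 0 < a j)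
    (η : Fin t → ℕ) (hη : StrictMono η) :
    (Matrix.of fun (i : Fin t) (j : Fin s) => a j ^ η i).rank = min t s :=
  statement_17_general t s a ha hapos η hη
end

section
/- Let 0 < ε < 1 and let K ≥ 1 be an integer. Then for every choice of integers v_1, …, v_K ∈ ℤ, the Lebesgue measure of the set {t ∈ [0,1] : ‖t v_ℓ‖ ≤ ε for all 1 ≤ ℓ ≤ K} is at least (1/2)·(ε/2)^K, where ‖s‖ denotes the distance from the real number s to the nearest integer. -/
/-!
Take `N = ⌈1/ε⌉₊`, so that `ε/2 ≤ 1/N ≤ ε`. Sorting `t ∈ [0,1]` into `N^K` cells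
according to the values `⌊N · fract (t v_ℓ)⌋`, some cell `B` has measure at least
`N^(-K) ≥ (ε/2)^K`, and any difference `s - t` of two points of `B` satisfies
`‖(s - t) v_ℓ‖ ≤ 1/N ≤ ε` for all `ℓ`. Translating `B` by one of its points puts it inside
`[-1,1]`, and the reflection `t ↦ -t` folds the negative half onto `[0,1]`, costing the
factor `1/2`.
-/

open MeasureTheory Set

theorem exists_measure_div_card_le_measure_inter_preimage {α ι : Type*} [MeasurableSpace α]
    [Fintype ι] [Nonempty ι] (μ : Measure α) (S : Set α) (f : α → ι) :
    ∃ i, μ S / Fintype.card ι ≤ μ (S ∩ f ⁻¹' {i}) := by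
  have hcover : μ S ≤ ∑ i, μ (S ∩ f ⁻¹' {i}) := calc
    μ S ≤ μ (⋃ i, S ∩ f ⁻¹' {i}) := measure_mono fun x hx ↦ mem_iUnion.2 ⟨f x, hx, rfl⟩
    _ ≤ ∑ i, μ (S ∩ f ⁻¹' {i}) := measure_iUnion_fintype_le _ _
  have hsum : ∑ _i : ι, μ S / Fintype.card ι = μ S := by
    rw [Finset.sum_const, Finset.card_univ, nsmul_eq_mul,
      ENNReal.mul_div_cancel (by simp) (ENNReal.natCast_ne_top _)]
  obtain ⟨i, -, hi⟩ :=
    ENNReal.exists_le_of_sum_le Finset.univ_nonempty (hsum.trans_le hcover)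
  exact ⟨i, hi⟩

theorem abs_fract_sub_fract_lt_of_floor_eq {N : ℕ} (hN : 0 < N) {x y : ℝ}
    (h : ⌊N * Int.fract x⌋₊ = ⌊N * Int.fract y⌋₊) : |Int.fract x - Int.fract y| < 1 / N := by
  have hN' : (0 : ℝ) < N := Nat.cast_pos.2 hN
  have hfloor : ⌊N * Int.fract x⌋ = ⌊N * Int.fract y⌋ := by
    rw [← Int.natCast_floor_eq_floor (by positivity),
      ← Int.natCast_floor_eq_floor (by positivity), h]
  have := Int.abs_sub_lt_one_of_floor_eq_floor hfloor
  rw [← mul_sub, abs_mul, abs_of_pos hN'] at this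
  rwa [lt_div_iff₀ hN', mul_comm]

theorem abs_sub_sub_round_le_abs_fract_sub_fract (x y : ℝ) :
    |x - y - round (x - y)| ≤ |Int.fract x - Int.fract y| := by
  have h := round_le (x - y) (⌊x⌋ - ⌊y⌋)
  rwa [Int.cast_sub, show x - y - (⌊x⌋ - ⌊y⌋ : ℝ) = Int.fract x - Int.fract y by
    simp only [Int.fract]; ring] at h

theorem exists_subset_Icc_fract_mul_close {ι : Type*} [Fintype ι] (w : ι → ℝ) {N : ℕ}
    (hN : 0 < N) :
    ∃ B ⊆ Icc (0 : ℝ) 1, ((N : ENNReal) ^ Fintype.card ι)⁻¹ ≤ volume B ∧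
      ∀ s ∈ B, ∀ t ∈ B, ∀ i, |Int.fract (s * w i) - Int.fract (t * w i)| < 1 / N := by
  classical
  have : NeZero N := ⟨hN.ne'⟩
  let cell (t : ℝ) (i : ι) : Fin N := ⟨⌊N * Int.fract (t * w i)⌋₊, by
    rw [Nat.floor_lt (by positivity)]
    exact mul_lt_of_lt_one_right (Nat.cast_pos.2 hN) (Int.fract_lt_one _)⟩
  obtain ⟨c, hc⟩ :=
    exists_measure_div_card_le_measure_inter_preimage volume (Icc (0 : ℝ) 1) cell
  refine ⟨_, inter_subset_left (t := cell ⁻¹' {c}), ?_, fun s hs t ht i ↦ ?_⟩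
  · simpa [ENNReal.div_eq_inv_mul] using hc
  · refine abs_fract_sub_fract_lt_of_floor_eq hN ?_
    exact congrArg Fin.val (congrFun (hs.2.trans ht.2.symm) i)

theorem volume_le_two_mul_volume_Icc_inter_of_sub_mem {B D : Set ℝ} {r : ℝ}
    (hB : B ⊆ Icc 0 r) (hD : ∀ s ∈ B, ∀ t ∈ B, s - t ∈ D) :
    volume B ≤ 2 * volume (Icc 0 r ∩ D) := by
  rcases B.eq_empty_or_nonempty with rfl | ⟨a, ha⟩
  · simp
  have hshift : (· + a) ⁻¹' B ⊆ (Icc 0 r ∩ D) ∪ -(Icc 0 r ∩ D) := by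
    intro t ht
    have hta := hB ht
    have ha' := hB ha
    rcases le_total 0 t with h | h
    · exact Or.inl ⟨⟨h, by linarith [hta.2, ha'.1]⟩, by simpa using hD _ ht _ ha⟩
    · exact Or.inr ⟨⟨by linarith, by linarith [hta.1, ha'.2]⟩, by simpa using hD _ ha _ ht⟩
  calc volume B = volume ((· + a) ⁻¹' B) := (measure_preimage_add_right _ _ _).symm
    _ ≤ volume (Icc 0 r ∩ D) + volume (-(Icc 0 r ∩ D)) :=
      (measure_mono hshift).trans (measure_union_le _ _)
    _ = 2 * volume (Icc 0 r ∩ D) := by rw [Measure.measure_neg, two_mul]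

theorem div_two_le_one_div_natCeil_one_div {ε : ℝ} (hε0 : 0 < ε) (hε2 : ε < 2) :
    ε / 2 ≤ 1 / (⌈1 / ε⌉₊ : ℝ) := by
  have hceil := Nat.ceil_lt_two_mul (a := 1 / ε) (by rw [one_div]; gcongr)
  rw [div_le_div_iff₀ two_pos (by linarith [Nat.le_ceil (1 / ε), one_div_pos.2 hε0])]
  nlinarith [mul_div_cancel₀ (1 : ℝ) hε0.ne']

theorem one_div_natCeil_one_div_le {ε : ℝ} (hε0 : 0 < ε) : 1 / (⌈1 / ε⌉₊ : ℝ) ≤ ε := by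
  rw [div_le_iff₀ (by positivity), ← div_le_iff₀' hε0]
  exact Nat.le_ceil _

theorem statement_19_general
    (ε : ℝ) (hε1 : 0 < ε) (hε2 : ε < 1) (K : ℕ)
    (v : Fin K → ℤ) :
    ENNReal.ofReal ((1 / 2) * (ε / 2) ^ K) ≤
      volume {t : ℝ | t ∈ Set.Icc (0 : ℝ) 1 ∧
        ∀ ℓ : Fin K, |t * (v ℓ : ℝ) - (round (t * (v ℓ : ℝ)) : ℝ)| ≤ ε} := by
  set N := ⌈1 / ε⌉₊
  have hN : 0 < N := Nat.ceil_pos.2 (by positivity)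
  obtain ⟨B, hB, hvol, hclose⟩ := exists_subset_Icc_fract_mul_close (fun ℓ ↦ (v ℓ : ℝ)) hN
  have hpow : ENNReal.ofReal ((ε / 2) ^ K) ≤ ((N : ENNReal) ^ K)⁻¹ := by
    rw [ENNReal.inv_pow, ← ENNReal.ofReal_natCast,
      ← ENNReal.ofReal_inv_of_pos (by positivity), ← ENNReal.ofReal_pow (by positivity), ← one_div]
    exact ENNReal.ofReal_le_ofReal
      (pow_le_pow_left₀ (by positivity) (div_two_le_one_div_natCeil_one_div hε1 (by linarith)) K)
  rw [ENNReal.ofReal_mul (by norm_num), one_div, ENNReal.ofReal_inv_of_pos two_pos,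
    ENNReal.ofReal_ofNat, ENNReal.inv_mul_le_iff (by norm_num) (by norm_num)]
  calc ENNReal.ofReal ((ε / 2) ^ K) ≤ volume B := hpow.trans (by simpa using hvol)
    _ ≤ 2 * volume _ := by
      refine volume_le_two_mul_volume_Icc_inter_of_sub_mem hB fun s hs t ht ℓ ↦ ?_
      rw [sub_mul]
      exact (abs_sub_sub_round_le_abs_fract_sub_fract _ _).trans
        ((hclose s hs t ht ℓ).le.trans (one_div_natCeil_one_div_le hε1))

theorem statement_19
    (ε : ℝ) (hε1 : 0 < ε) (hε2 : ε < 1) (K : ℕ) (hK : 1 ≤ K)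
    (v : Fin K → ℤ) :
    ENNReal.ofReal ((1 / 2) * (ε / 2) ^ K) ≤
      volume {t : ℝ | t ∈ Set.Icc (0 : ℝ) 1 ∧
        ∀ ℓ : Fin K, |t * (v ℓ : ℝ) - (round (t * (v ℓ : ℝ)) : ℝ)| ≤ ε} :=
  statement_19_general ε hε1 hε2 K v
end
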